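/- arXiv:1009.6072 — 2 statements merged into one kernel-verified Lean document; each statement's English description precedes it below -/
import Mathlib

section
/- If χ and χ' are two distinct Dirichlet characters modulo M (with values in any field), then there exists a prime number p with p < M, p not dividing M, and χ(p) ≠ χ'(p). -/
/-! Both characters are completely multiplicative, so agreement at the small primes not dividing
`M` propagates to every `n < M` coprime to `M`, and these represent all units of `ZMod M`. -/

namespace DirichletCharacter

variable {R : Type*} [CommMonoidWithZero R] {M : ℕ}

theorem natCast_eq_of_forall_prime {χ χ' : DirichletCharacter R M}
    (hprime : ∀ p : ℕ, p.Prime → p < M → ¬ p ∣ M → χ p = χ' p) {n : ℕ} (hcop : n.Coprime M)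
    (hlt : n < M) : χ n = χ' n := by
  induction n using induction_on_primes with
  | zero =>
    obtain rfl : M = 1 := Nat.coprime_zero_left M |>.mp hcop
    rw [Subsingleton.elim ((0 : ℕ) : ZMod 1) 1, map_one, map_one]
  | one => simp
  | prime_mul p a hp ih =>
    rcases Nat.eq_zero_or_pos a with rfl | ha
    · rw [mul_zero] at hcop hlt ⊢
      exact ih hcop hlt
    have hpa : p.Coprime M ∧ a.Coprime M := Nat.coprime_mul_iff_left.mp hcop
    have hp_lt : p < M := (Nat.le_mul_of_pos_right p ha).trans_lt hlt
    have ha_lt : a < M := (Nat.le_mul_of_pos_left a hp.pos).trans_lt hlt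
    rw [Nat.cast_mul, map_mul, map_mul,
      hprime p hp hp_lt ((Nat.Prime.coprime_iff_not_dvd hp).mp hpa.1), ih hpa.2 ha_lt]

theorem eq_of_forall_natCast_coprime_lt [NeZero M] {χ χ' : DirichletCharacter R M}
    (h : ∀ n : ℕ, n.Coprime M → n < M → χ n = χ' n) : χ = χ' := by
  ext u
  rw [← ZMod.natCast_zmod_val (u : ZMod M)]
  exact h _ (ZMod.val_coe_unit_coprime u) (ZMod.val_lt _)

end DirichletCharacter

/-- If χ and χ' are two distinct Dirichlet characters modulo `M` (with values in a field `F`),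
then there exists a prime `p < M` with `p ∤ M` and `χ p ≠ χ' p`. -/
theorem distinct_dirichlet_characters_differ_at_small_prime
    {F : Type*} [Field F] {M : ℕ} (hM : 0 < M)
    (χ χ' : DirichletCharacter F M) (h : χ ≠ χ') :
    ∃ p : ℕ, p.Prime ∧ p < M ∧ ¬ p ∣ M ∧ χ (p : ZMod M) ≠ χ' (p : ZMod M) := by
  have : NeZero M := ⟨hM.ne'⟩
  by_contra! hprime
  exact h <| DirichletCharacter.eq_of_forall_natCast_coprime_lt fun n hcop hlt ↦
    DirichletCharacter.natCast_eq_of_forall_prime hprime hcop hlt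
end

section
/- For a prime p and a nonnegative integer valued sequence: if f = Σ_{n≥0} a_n q^n ∈ M_k(Γ_0(p^r N_0), χ) with r ≥ 2, gcd(p, N_0) = 1, and χ a character mod p^{r−1}N_0, then f|U(p) = Σ_{n≥0} a_{pn} q^n lies in M_k(Γ_0(p^{r−1}N_0), χ), i.e., U(p) lowers the level from p^r N_0 to p^{r−1}N_0. -/
open scoped ModularForm Manifold MatrixGroups
open UpperHalfPlane CongruenceSubgroup

/-- `f` is a holomorphic modular form of weight `k` and level `Γ₀(N)` with nebentypus `χ`. -/
def IsModularFormWithChar (k : ℤ) (N : ℕ) (χ : DirichletCharacter ℂ N) (f : ℍ → ℂ) : Prop :=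
  MDifferentiable 𝓘(ℂ) 𝓘(ℂ) f ∧
  (∀ γ : SL(2, ℤ), γ ∈ Gamma0 N → f ∣[k] γ = χ ((γ 1 1 : ℤ) : ZMod N) • f) ∧
  (∀ γ : SL(2, ℤ), IsBoundedAtImInfty (f ∣[k] γ))

lemma aux_im_pos {p : ℕ} (hp : 0 < p) (m : ℕ) (z : UpperHalfPlane) :
    0 < ((((z : ℂ) + (m : ℂ)) / (p : ℂ))).im := by
  have hp' : (0 : ℝ) < (p : ℝ) := by exact_mod_cast hp
  have : (((z : ℂ) + (m : ℂ)) / (p : ℂ)).im = ((z : ℂ) + (m : ℂ)).im / (p : ℝ) := by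
    rw [show ((p : ℂ)) = (((p : ℝ) : ℂ)) by push_cast; rfl, Complex.div_ofReal_im]
  rw [this]
  have : ((z : ℂ) + (m : ℂ)).im = (z : ℂ).im := by simp
  rw [this]
  exact div_pos z.2 hp'

/-!
Write `α_j = [[1, j], [0, p]]` (`uMatrix p j`), so that `f|U(p) = Σ_{0 ≤ j < p} f ∣[k] α_j`. For
`γ = [[a, b], [c, d]] ∈ Γ₀(M)` with `p ∣ M`, one has `α_j γ = γ' α_{j'}` where
`j' ≡ d (b + j d) (mod p)` and `γ' ∈ Γ₀(pM)` has lower right entry `d - j' c ≡ d (mod M)`.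
Since `d` is a unit mod `p`, `j ↦ j'` permutes the residues mod `p`, so
`(f|U(p)) ∣[k] γ = χ(d) · f|U(p)`. Boundedness at the cusps holds because each `α_j γ` is a
rational matrix, so it maps `∞` to a cusp of `SL(2, ℤ)`, where `f` is bounded.
-/

open ModularForm Matrix.SpecialLinearGroup
open scoped OnePoint

lemma isBoundedAtImInfty_slash_of_isCusp {k : ℤ} {f : ℍ → ℂ}
    (hf : ∀ γ : SL(2, ℤ), IsBoundedAtImInfty (f ∣[k] γ)) {g : GL (Fin 2) ℝ}
    (hg : IsCusp (g • ∞) 𝒮ℒ) : IsBoundedAtImInfty (f ∣[k] g) :=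
  (OnePoint.isBoundedAt_iff rfl).mp ((OnePoint.isBoundedAt_iff_forall_SL2Z hg).mpr fun γ _ ↦ hf γ)

lemma isCusp_smul_infty_of_intCast {g : GL (Fin 2) ℝ} {a c : ℤ} (ha : g 0 0 = a)
    (hc : g 1 0 = c) : IsCusp (g • ∞) 𝒮ℒ := by
  rw [isCusp_SL2Z_iff, OnePoint.smul_infty_eq_ite]
  split_ifs
  · exact ⟨∞, rfl⟩
  · exact ⟨((a / c : ℚ) : OnePoint ℚ), by simp [ha, hc]⟩

lemma Gamma0_le_of_dvd {M N : ℕ} (h : N ∣ M) : Gamma0 M ≤ Gamma0 N := fun γ hγ ↦ by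
  rw [Gamma0_mem] at hγ ⊢
  simpa using congrArg (ZMod.castHom h (ZMod N)) hγ

lemma isCoprime_of_mem_Gamma0 {N : ℕ} {γ : SL(2, ℤ)} (hγ : γ ∈ Gamma0 N) :
    IsCoprime (γ 1 1) (N : ℤ) := by
  obtain ⟨t, ht⟩ := (ZMod.intCast_zmod_eq_zero_iff_dvd _ _).mp (Gamma0_mem.mp hγ)
  have hdet := γ.det_coe
  rw [Matrix.det_fin_two, ht] at hdet
  exact ⟨γ 0 0, -(γ 0 1 * t), by linear_combination hdet⟩

lemma intCast_mul_intCast_eq_one_of_mem_Gamma0 {N : ℕ} {γ : SL(2, ℤ)} (hγ : γ ∈ Gamma0 N) :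
    ((γ 0 0 : ℤ) : ZMod N) * (γ 1 1 : ℤ) = 1 := by
  have hdet : γ 0 0 * γ 1 1 - γ 0 1 * γ 1 0 = 1 := by
    rw [← Matrix.det_fin_two]; exact γ.det_coe
  have := congrArg (Int.cast : ℤ → ZMod N) hdet
  push_cast at this
  rwa [Gamma0_mem.mp hγ, mul_zero, sub_zero] at this

lemma changeLevel_apply_of_mem_Gamma0 {M N : ℕ} (hMN : M ∣ N) (χ : DirichletCharacter ℂ M)
    {γ : SL(2, ℤ)} (hγ : γ ∈ Gamma0 N) {d : ℤ} (hd : γ 1 1 ≡ d [ZMOD M]) :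
    DirichletCharacter.changeLevel hMN χ (γ 1 1 : ZMod N) = χ d := by
  rw [DirichletCharacter.changeLevel_eq_cast_of_dvd' χ hMN (isCoprime_of_mem_Gamma0 hγ),
    (ZMod.intCast_eq_intCast_iff _ _ _).mpr hd]

lemma sum_range_eq_sum_zmod_val {α : Type*} [AddCommMonoid α] (p : ℕ) [NeZero p] (F : ℕ → α) :
    ∑ m ∈ Finset.range p, F m = ∑ x : ZMod p, F x.val :=
  Finset.sum_nbij' (fun m ↦ (m : ZMod p)) ZMod.val (fun _ _ ↦ Finset.mem_univ _)
    (fun x _ ↦ Finset.mem_range.2 x.val_lt)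
    (fun _ hm ↦ ZMod.val_cast_of_lt (Finset.mem_range.1 hm)) (fun x _ ↦ ZMod.natCast_zmod_val x)
    (fun _ hm ↦ by rw [ZMod.val_cast_of_lt (Finset.mem_range.1 hm)])

lemma bijective_affine_of_isUnit {R : Type*} [CommRing R] [Finite R] {u : R} (hu : IsUnit u)
    (b : R) : Function.Bijective fun x : R ↦ u * (b + x * u) :=
  Finite.injective_iff_bijective.mp fun _ _ hxy ↦
    hu.mul_right_cancel (add_left_cancel (hu.mul_left_cancel hxy))

noncomputable def uMatrix (p : ℕ) [NeZero p] (j : ℤ) : GL (Fin 2) ℝ :=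
  Matrix.GeneralLinearGroup.mkOfDetNeZero !![1, (j : ℝ); 0, (p : ℝ)]
    (by simp [Matrix.det_fin_two_of, NeZero.ne p])

section uMatrix

variable {p : ℕ} [NeZero p] {j : ℤ}

@[simp] lemma uMatrix_apply_zero_zero : uMatrix p j 0 0 = 1 := rfl
@[simp] lemma uMatrix_apply_zero_one : uMatrix p j 0 1 = j := rfl
@[simp] lemma uMatrix_apply_one_zero : uMatrix p j 1 0 = 0 := rfl
@[simp] lemma uMatrix_apply_one_one : uMatrix p j 1 1 = p := rfl

lemma det_uMatrix : (uMatrix p j).det.val = p := by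
  simp [Matrix.GeneralLinearGroup.val_det_apply, Matrix.det_fin_two]

lemma σ_uMatrix : σ (uMatrix p j) = .refl ℝ ℂ := by
  rw [σ, det_uMatrix, if_pos (mod_cast NeZero.pos p)]

lemma denom_uMatrix (z : ℂ) : denom (uMatrix p j) z = p := by
  simp [denom]

lemma coe_uMatrix_smul (z : ℍ) : ((uMatrix p j • z : ℍ) : ℂ) = (z + j) / p := by
  rw [coe_smul, σ_uMatrix, denom_uMatrix]
  simp [num]

lemma uMatrix_slash_apply (k : ℤ) (f : ℍ → ℂ) (z : ℍ) :
    (f ∣[k] uMatrix p j) z = (p : ℂ)⁻¹ * f (uMatrix p j • z) := by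
  have hp : (p : ℂ) ≠ 0 := NeZero.ne _
  rw [slash_apply, σ_uMatrix, det_uMatrix, denom_uMatrix, ContinuousAlgEquiv.refl_apply,
    Nat.abs_cast, Complex.ofReal_natCast, zpow_sub₀ hp, zpow_one, zpow_neg]
  field_simp

lemma smul_slash_uMatrix (k : ℤ) (f : ℍ → ℂ) (c : ℂ) :
    (c • f) ∣[k] uMatrix p j = c • f ∣[k] uMatrix p j := by
  rw [smul_slash, σ_uMatrix]; rfl

lemma uMatrix_mul_eq_mul_uMatrix (γ : SL(2, ℤ)) {j' : ℤ}
    (h : (p : ℤ) ∣ γ 0 1 + j * γ 1 1 - j' * (γ 0 0 + j * γ 1 0)) :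
    ∃ γ' : SL(2, ℤ), γ' 1 0 = p * γ 1 0 ∧ γ' 1 1 = γ 1 1 - j' * γ 1 0 ∧
      uMatrix p j * mapGL ℝ γ = mapGL ℝ γ' * uMatrix p j' := by
  obtain ⟨e, he⟩ := h
  have hdet : γ 0 0 * γ 1 1 - γ 0 1 * γ 1 0 = 1 := by
    rw [← Matrix.det_fin_two]; exact γ.det_coe
  obtain ⟨γ', hγ'⟩ : ∃ γ' : SL(2, ℤ),
      (γ' : Matrix (Fin 2) (Fin 2) ℤ) = !![γ 0 0 + j * γ 1 0, e; p * γ 1 0, γ 1 1 - j' * γ 1 0] :=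
    ⟨⟨_, by rw [Matrix.det_fin_two_of]; linear_combination hdet + γ 1 0 * he⟩, rfl⟩
  refine ⟨γ', by simp [hγ'], by simp [hγ'], Units.ext ?_⟩
  have heR : (p : ℝ) * e = γ 0 1 + j * γ 1 1 - j' * (γ 0 0 + j * γ 1 0) := by
    exact_mod_cast he.symm
  rw [Units.val_mul, Units.val_mul, mapGL_coe_matrix, mapGL_coe_matrix, map_apply_coe,
    map_apply_coe, hγ']
  ext i l
  fin_cases i <;> fin_cases l <;>
    simp [uMatrix, Matrix.mul_apply, Fin.sum_univ_two] <;> linarith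

lemma exists_uMatrix_mul_eq_of_mem_Gamma0 {M : ℕ} (hpM : p ∣ M) {γ : SL(2, ℤ)}
    (hγ : γ ∈ Gamma0 M) (x : ZMod p) :
    ∃ γ' : SL(2, ℤ), γ' ∈ Gamma0 (p * M) ∧ γ' 1 1 ≡ γ 1 1 [ZMOD M] ∧
      uMatrix p x.val * mapGL ℝ γ = mapGL ℝ γ' *
        uMatrix p ((γ 1 1 : ZMod p) * ((γ 0 1 : ZMod p) + x * (γ 1 1 : ZMod p))).val := by
  have hc : (M : ℤ) ∣ γ 1 0 := (ZMod.intCast_zmod_eq_zero_iff_dvd _ _).mp (Gamma0_mem.mp hγ)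
  have hγp := Gamma0_le_of_dvd hpM hγ
  have had := intCast_mul_intCast_eq_one_of_mem_Gamma0 hγp
  have hcp := Gamma0_mem.mp hγp
  obtain ⟨γ', h10, h11, heq⟩ := uMatrix_mul_eq_mul_uMatrix (p := p) γ (j := x.val)
    (j' := ((γ 1 1 : ZMod p) * ((γ 0 1 : ZMod p) + x * (γ 1 1 : ZMod p))).val) (by
    rw [← ZMod.intCast_zmod_eq_zero_iff_dvd]
    push_cast
    simp only [ZMod.natCast_val, ZMod.cast_id', id, hcp]
    linear_combination (-((γ 0 1 : ZMod p) + x * (γ 1 1 : ZMod p))) * had)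
  refine ⟨γ', ?_, ?_, heq⟩
  · rw [Gamma0_mem, h10, ZMod.intCast_zmod_eq_zero_iff_dvd]
    push_cast
    exact mul_dvd_mul_left _ hc
  · rw [h11, Int.modEq_iff_dvd]
    simpa using hc.mul_left _

end uMatrix

/-- `f|U(p)`, written as a sum of weight-`k` slashes. -/
noncomputable def heckeU (k : ℤ) (p : ℕ) [NeZero p] (f : ℍ → ℂ) : ℍ → ℂ :=
  ∑ m ∈ Finset.range p, f ∣[k] uMatrix p m

section heckeU

variable {k : ℤ} {p M N : ℕ} [NeZero p] {f : ℍ → ℂ}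

lemma heckeU_eq (f : ℍ → ℂ) : heckeU k p f = fun z : ℍ ↦ (p : ℂ)⁻¹ *
    ∑ m ∈ Finset.range p, f (UpperHalfPlane.mk (((z : ℂ) + (m : ℂ)) / (p : ℂ))
      (aux_im_pos (NeZero.pos p) m z)) := by
  ext z
  simp only [heckeU, Finset.sum_apply, uMatrix_slash_apply, Finset.mul_sum]
  refine Finset.sum_congr rfl fun m _ ↦ congrArg _ (congrArg f (UpperHalfPlane.ext ?_))
  simp [coe_uMatrix_smul]

lemma heckeU_slash (γ : SL(2, ℤ)) :
    heckeU k p f ∣[k] γ = ∑ m ∈ Finset.range p, f ∣[k] (uMatrix p m * mapGL ℝ γ) := by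
  simp only [heckeU, SlashAction.sum_slash, SL_slash, SlashAction.slash_mul]
  rfl

lemma MDifferentiable.heckeU (hf : MDifferentiable 𝓘(ℂ) 𝓘(ℂ) f) :
    MDifferentiable 𝓘(ℂ) 𝓘(ℂ) (heckeU k p f) :=
  MDifferentiable.sum fun m _ ↦ hf.slash k (uMatrix p m)

lemma isBoundedAtImInfty_heckeU_slash (hf : ∀ γ : SL(2, ℤ), IsBoundedAtImInfty (f ∣[k] γ))
    (γ : SL(2, ℤ)) : IsBoundedAtImInfty (heckeU k p f ∣[k] γ) := by
  rw [heckeU_slash]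
  refine Submodule.sum_mem (Filter.boundedFilterSubmodule ℂ atImInfty) fun m _ ↦
    isBoundedAtImInfty_slash_of_isCusp hf
      (isCusp_smul_infty_of_intCast (a := γ 0 0 + m * γ 1 0) (c := p * γ 1 0) ?_ ?_) <;>
    simp [Matrix.mul_apply, Fin.sum_univ_two]

variable {χ : DirichletCharacter ℂ M}

lemma slash_uMatrix_mul_of_mem_Gamma0 (hpM : p ∣ M) (hMN : M ∣ N) (hNM : N ∣ p * M)
    (hf : ∀ γ : SL(2, ℤ), γ ∈ Gamma0 N →
      f ∣[k] γ = DirichletCharacter.changeLevel hMN χ ((γ 1 1 : ℤ) : ZMod N) • f)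
    {γ : SL(2, ℤ)} (hγ : γ ∈ Gamma0 M) (x : ZMod p) :
    f ∣[k] (uMatrix p x.val * mapGL ℝ γ) = χ (γ 1 1 : ℤ) •
      f ∣[k] uMatrix p ((γ 1 1 : ZMod p) * ((γ 0 1 : ZMod p) + x * (γ 1 1 : ZMod p))).val := by
  obtain ⟨γ', hγ', h11, heq⟩ := exists_uMatrix_mul_eq_of_mem_Gamma0 hpM hγ x
  have hγ'N := Gamma0_le_of_dvd hNM hγ'
  have hslash : f ∣[k] mapGL ℝ γ' = f ∣[k] γ' := rfl
  rw [heq, SlashAction.slash_mul, hslash, hf γ' hγ'N, smul_slash_uMatrix,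
    changeLevel_apply_of_mem_Gamma0 hMN χ hγ'N h11]

lemma heckeU_slash_of_mem_Gamma0 (hpM : p ∣ M) (hMN : M ∣ N) (hNM : N ∣ p * M)
    (hf : ∀ γ : SL(2, ℤ), γ ∈ Gamma0 N →
      f ∣[k] γ = DirichletCharacter.changeLevel hMN χ ((γ 1 1 : ℤ) : ZMod N) • f)
    {γ : SL(2, ℤ)} (hγ : γ ∈ Gamma0 M) :
    heckeU k p f ∣[k] γ = χ (γ 1 1 : ℤ) • heckeU k p f := by
  have hd : IsUnit ((γ 1 1 : ℤ) : ZMod p) := .of_mul_eq_one _ <| by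
    rw [mul_comm]; exact intCast_mul_intCast_eq_one_of_mem_Gamma0 (Gamma0_le_of_dvd hpM hγ)
  rw [heckeU_slash, sum_range_eq_sum_zmod_val]
  simp_rw [slash_uMatrix_mul_of_mem_Gamma0 hpM hMN hNM hf hγ]
  rw [← Finset.smul_sum, heckeU, sum_range_eq_sum_zmod_val,
    Fintype.sum_bijective _ (bijective_affine_of_isUnit hd _) _ (fun x ↦ f ∣[k] uMatrix p x.val)
      fun _ ↦ rfl]

theorem IsModularFormWithChar.heckeU (hpM : p ∣ M) (hMN : M ∣ N) (hNM : N ∣ p * M)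
    (hf : IsModularFormWithChar k N (DirichletCharacter.changeLevel hMN χ) f) :
    IsModularFormWithChar k M χ (heckeU k p f) :=
  ⟨hf.1.heckeU, fun _ hγ ↦ heckeU_slash_of_mem_Gamma0 hpM hMN hNM hf.2.1 hγ,
    isBoundedAtImInfty_heckeU_slash hf.2.2⟩

end heckeU

theorem U_apply_lowers_level_general
    (k : ℤ) (p r N₀ : ℕ) (hp : p.Prime) (hr : 2 ≤ r)
    (χ : DirichletCharacter ℂ (p ^ (r - 1) * N₀)) (f : ℍ → ℂ)
    (hf : IsModularFormWithChar k (p ^ r * N₀)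
      (DirichletCharacter.changeLevel
        (mul_dvd_mul_right (pow_dvd_pow p (Nat.sub_le r 1)) N₀) χ) f) :
    IsModularFormWithChar k (p ^ (r - 1) * N₀) χ
      (fun z : ℍ => (p : ℂ)⁻¹ *
        ∑ m ∈ Finset.range p, f (UpperHalfPlane.mk (((z : ℂ) + (m : ℂ)) / (p : ℂ))
          (aux_im_pos hp.pos m z))) := by
  have : NeZero p := ⟨hp.ne_zero⟩
  have hpM : p ∣ p ^ (r - 1) * N₀ := dvd_mul_of_dvd_left (dvd_pow_self p (by omega)) N₀
  have hNM : p ^ r * N₀ ∣ p * (p ^ (r - 1) * N₀) := by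
    rw [← mul_assoc, ← pow_succ', Nat.sub_add_cancel (by omega)]
  simpa only [heckeU_eq] using hf.heckeU hpM _ hNM

/-- If `f ∈ M_k(Γ₀(pʳN₀), χ)` with `r ≥ 2`, `gcd(p, N₀) = 1`, and `χ` a character mod
`p^(r-1)N₀`, then `f|U(p) = Σ a_{pn} qⁿ` lies in `M_k(Γ₀(p^(r-1)N₀), χ)`: the operator
`U(p)`, given by `(f|U(p))(z) = (1/p) Σ_{m=0}^{p-1} f((z+m)/p)`, lowers the level from
`pʳN₀` to `p^(r-1)N₀`. -/
theorem U_apply_lowers_level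
    (k : ℤ) (p r N₀ : ℕ) (hp : p.Prime) (hr : 2 ≤ r) (hpN₀ : Nat.gcd p N₀ = 1)
    (χ : DirichletCharacter ℂ (p ^ (r - 1) * N₀)) (f : ℍ → ℂ)
    (hf : IsModularFormWithChar k (p ^ r * N₀)
      (DirichletCharacter.changeLevel
        (mul_dvd_mul_right (pow_dvd_pow p (Nat.sub_le r 1)) N₀) χ) f) :
    IsModularFormWithChar k (p ^ (r - 1) * N₀) χ
      (fun z : ℍ => (p : ℂ)⁻¹ *
        ∑ m ∈ Finset.range p, f (UpperHalfPlane.mk (((z : ℂ) + (m : ℂ)) / (p : ℂ))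
          (aux_im_pos hp.pos m z))) :=
  U_apply_lowers_level_general k p r N₀ hp hr χ f hf
end
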